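/- arXiv:2108.05741 — 3 statements merged into one kernel-verified Lean document; each statement's English description precedes it below -/
import Mathlib

section
/- Let $a > 1$ and $\theta \in (0,\pi)$. Define $\epsilon(a,\theta) = \frac{\cos\theta + \sqrt{\cos^2\theta + 4a(a-1)}}{2a}$ and, for $\epsilon' \in \{+1,-1\}$, $H(a,\theta) = -\frac{1}{2a} - \epsilon'\sqrt{1 - \cos\theta\,\frac{\cos\theta + \sqrt{4a^2-4a+\cos^2\theta}}{2a}}$. Then $\frac{\partial H}{\partial a}(a,\theta) \neq 0$. -/
/-!
Write `e = keplerEccentricity c a` (`c = cos θ`), `s = 2 a e - c = √(4 a² - 4 a + c²)` and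
`w = √(1 - c e)`. Since `a (1 - e²) = 1 - c e`, the energy has derivative
`(s + ε' a c w) / (2 a² s)`, which can vanish only if `s² = a² c² w²`. Multiplying by
`(1 - e²)²` and using `a (1 - e²) = 1 - c e` again turns this into
`c² (1 - c e)³ = (2 e - c - c e²)²`, which is impossible for `0 < e < 1`, `c < e`, `-1 < c`:
for `c > 0` both sides are separated by `c² (1 - c²)²`, and for `c ≤ 0` the difference is
`e` times a polynomial in `-c ∈ [0, 1)` and `e` with positive terms.
-/

open Real

lemma sq_mul_one_sub_mul_pow_three_lt {c e : ℝ} (hc : -1 < c) (he0 : 0 < e) (he1 : e < 1)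
    (hce : c < e) : c ^ 2 * (1 - c * e) ^ 3 < (2 * e - c - c * e ^ 2) ^ 2 := by
  rcases le_or_gt c 0 with hc0 | hc0
  · obtain ⟨t, rfl⟩ : ∃ t, c = -t := ⟨-c, by ring⟩
    have ht0 : 0 ≤ t := by linarith
    have ht2 : t ^ 2 ≤ 1 := by nlinarith
    have ht4 : t ^ 4 ≤ 1 := by nlinarith
    have hbracket : 0 < t * (4 - 3 * t ^ 2) + e * (4 + 2 * t ^ 2 - 3 * t ^ 4)
        + e ^ 2 * t * (4 - t ^ 4) + t ^ 2 * e ^ 3 := by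
      have : 0 ≤ t * (4 - 3 * t ^ 2) := mul_nonneg ht0 (by linarith)
      have : 0 < e * (4 + 2 * t ^ 2 - 3 * t ^ 4) := mul_pos he0 (by nlinarith)
      have : 0 ≤ e ^ 2 * t * (4 - t ^ 4) := mul_nonneg (by positivity) (by linarith)
      have : 0 ≤ t ^ 2 * e ^ 3 := by positivity
      linarith
    have hdiff : (2 * e - -t - -t * e ^ 2) ^ 2 - (-t) ^ 2 * (1 - -t * e) ^ 3 =
        e * (t * (4 - 3 * t ^ 2) + e * (4 + 2 * t ^ 2 - 3 * t ^ 4)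
          + e ^ 2 * t * (4 - t ^ 4) + t ^ 2 * e ^ 3) := by ring
    nlinarith [mul_pos he0 hbracket]
  · have h1 : 0 < 1 - c * e := by nlinarith
    have h2 : 1 - c * e < 1 - c ^ 2 := by nlinarith
    -- `2 e - c - c e² - c (1 - c²) = (e - c) (2 - c (e + c))`
    have h3 : c * (1 - c ^ 2) ≤ 2 * e - c - c * e ^ 2 := by
      have : 0 < 2 - c * (e + c) := by nlinarith
      nlinarith [mul_pos (sub_pos.2 hce) this]
    calc c ^ 2 * (1 - c * e) ^ 3 < c ^ 2 * (1 - c ^ 2) ^ 2 := by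
          gcongr ?_ * ?_
          nlinarith [pow_lt_pow_left₀ h2 h1.le three_ne_zero]
      _ = (c * (1 - c ^ 2)) ^ 2 := by ring
      _ ≤ _ := pow_le_pow_left₀ (by nlinarith) h3 2

/-- The eccentricity of the Kepler ellipse with semi-major axis `a` meeting the unit circle at
polar angle `θ`, `c = cos θ`: the positive root `e` of `a * e ^ 2 - c * e = a - 1`. -/
noncomputable def keplerEccentricity (c a : ℝ) : ℝ :=
  (c + √(4 * a ^ 2 - 4 * a + c ^ 2)) / (2 * a)

section

variable {a c : ℝ}

lemma two_mul_mul_keplerEccentricity_sub (ha : 0 < a) :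
    2 * a * keplerEccentricity c a - c = √(4 * a ^ 2 - 4 * a + c ^ 2) := by
  unfold keplerEccentricity
  field_simp
  ring

lemma mul_one_sub_keplerEccentricity_sq (ha : 1 ≤ a) :
    a * (1 - keplerEccentricity c a ^ 2) = 1 - c * keplerEccentricity c a := by
  have hs := sq_sqrt (show 0 ≤ 4 * a ^ 2 - 4 * a + c ^ 2 by nlinarith [sq_nonneg c])
  unfold keplerEccentricity
  generalize √(4 * a ^ 2 - 4 * a + c ^ 2) = s at hs ⊢
  field_simp
  linear_combination -hs

lemma keplerEccentricity_pos (ha : 1 < a) : 0 < keplerEccentricity c a := by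
  have : -c < √(4 * a ^ 2 - 4 * a + c ^ 2) := lt_sqrt_of_sq_lt (by nlinarith)
  unfold keplerEccentricity
  exact div_pos (by linarith) (by linarith)

lemma keplerEccentricity_lt_one (ha : 1 < a) (hc : c < 1) : keplerEccentricity c a < 1 := by
  have : √(4 * a ^ 2 - 4 * a + c ^ 2) < 2 * a - c := (sqrt_lt' (by linarith)).2 (by nlinarith)
  unfold keplerEccentricity
  rw [div_lt_one (by linarith)]
  linarith

lemma lt_keplerEccentricity (ha : 1 < a) (hc : c < 1) : c < keplerEccentricity c a := by
  have he0 := keplerEccentricity_pos (c := c) ha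
  have he1 := keplerEccentricity_lt_one ha hc
  have hL := mul_one_sub_keplerEccentricity_sq (c := c) ha.le
  have : 1 - keplerEccentricity c a ^ 2 < a * (1 - keplerEccentricity c a ^ 2) :=
    lt_mul_of_one_lt_left (by nlinarith) ha
  nlinarith

lemma two_mul_mul_keplerEccentricity_sub_pos (ha : 1 < a) :
    0 < 2 * a * keplerEccentricity c a - c := by
  rw [two_mul_mul_keplerEccentricity_sub (by linarith)]
  exact sqrt_pos.2 (by nlinarith [sq_nonneg c])

lemma one_sub_mul_keplerEccentricity_pos (ha : 1 < a) (hc : c < 1) :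
    0 < 1 - c * keplerEccentricity c a := by
  rw [← mul_one_sub_keplerEccentricity_sq ha.le]
  have := keplerEccentricity_pos (c := c) ha
  have := keplerEccentricity_lt_one ha hc
  exact mul_pos (by linarith) (by nlinarith)

/-- Implicit differentiation of `a * e ^ 2 - c * e = a - 1`. -/
lemma hasDerivAt_keplerEccentricity (ha : 1 < a) :
    HasDerivAt (keplerEccentricity c)
      ((1 - keplerEccentricity c a ^ 2) / (2 * a * keplerEccentricity c a - c)) a := by
  have hD : 0 < 4 * a ^ 2 - 4 * a + c ^ 2 := by nlinarith [sq_nonneg c]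
  have hD' : HasDerivAt (fun x => 4 * x ^ 2 - 4 * x + c ^ 2) (8 * a - 4) a := by
    refine (((hasDerivAt_pow 2 a).const_mul 4).sub
      ((hasDerivAt_id a).const_mul 4)).add_const (c ^ 2) |>.congr_deriv ?_
    push_cast
    ring
  refine ((hD'.sqrt hD.ne').const_add c).div ((hasDerivAt_id' a).const_mul 2) (by positivity)
    |>.congr_deriv ?_
  rw [two_mul_mul_keplerEccentricity_sub (by linarith)]
  have hs := sq_sqrt hD.le
  have hs0 := sqrt_pos.2 hD
  unfold keplerEccentricity
  generalize √(4 * a ^ 2 - 4 * a + c ^ 2) = s at hs hs0 ⊢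
  field_simp
  linear_combination -hs

/-- The angular momentum of the arc is `√(1 - c e) = √(a (1 - e²))`, which is why `(1 - e²)`
disappears from the derivative. -/
lemma hasDerivAt_rotatingKeplerEnergy (ha : 1 < a) (hc : c < 1) (ε' : ℝ) :
    HasDerivAt (fun x => -(1 / (2 * x)) - ε' * √(1 - c * keplerEccentricity c x))
      ((2 * a * keplerEccentricity c a - c + ε' * a * c * √(1 - c * keplerEccentricity c a)) /
        (2 * a ^ 2 * (2 * a * keplerEccentricity c a - c))) a := by
  have ha0 : 0 < a := by linarith
  have hL := mul_one_sub_keplerEccentricity_sq (c := c) ha.le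
  have hs := two_mul_mul_keplerEccentricity_sub_pos (c := c) ha
  have hw2 := one_sub_mul_keplerEccentricity_pos ha hc
  have hw := sqrt_pos.2 hw2
  have hw2' := sq_sqrt hw2.le
  refine (((hasDerivAt_inv ha0.ne').div_const 2).neg.sub
    ((((hasDerivAt_keplerEccentricity ha).const_mul c).const_sub 1).sqrt hw2.ne' |>.const_mul ε')
    |>.congr_of_eventuallyEq ?_).congr_deriv ?_
  · filter_upwards with x
    simp only [Pi.sub_apply, Pi.neg_apply]
    ring
  · generalize keplerEccentricity c a = e at *
    generalize √(1 - c * e) = w at *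
    generalize 2 * a * e - c = s at *
    field_simp
    linear_combination ε' * a * c * (hL - hw2')

lemma sq_mul_one_sub_mul_keplerEccentricity_lt (ha : 1 < a) (hc : -1 < c) (hc' : c < 1) :
    (a * c) ^ 2 * (1 - c * keplerEccentricity c a) < (2 * a * keplerEccentricity c a - c) ^ 2 := by
  have he0 := keplerEccentricity_pos (c := c) ha
  have he1 := keplerEccentricity_lt_one ha hc'
  have key := sq_mul_one_sub_mul_pow_three_lt hc he0 he1 (lt_keplerEccentricity ha hc')
  have hL := mul_one_sub_keplerEccentricity_sq (c := c) ha.le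
  generalize keplerEccentricity c a = e at *
  have h1e : 0 < (1 - e ^ 2) ^ 2 := pow_pos (by nlinarith) 2
  refine lt_of_mul_lt_mul_right ?_ h1e.le
  calc (a * c) ^ 2 * (1 - c * e) * (1 - e ^ 2) ^ 2
        = c ^ 2 * (1 - c * e) * (a * (1 - e ^ 2)) ^ 2 := by ring
    _ = c ^ 2 * (1 - c * e) ^ 3 := by rw [hL]; ring
    _ < (2 * e - c - c * e ^ 2) ^ 2 := key
    _ = (2 * e * (a * (1 - e ^ 2)) + c * (e ^ 2 - 1)) ^ 2 := by rw [hL]; ring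
    _ = (2 * a * e - c) ^ 2 * (1 - e ^ 2) ^ 2 := by ring

lemma two_mul_mul_keplerEccentricity_sub_add_ne_zero (ha : 1 < a) (hc : -1 < c) (hc' : c < 1)
    {ε' : ℝ} (hε' : ε' ^ 2 = 1) :
    2 * a * keplerEccentricity c a - c + ε' * a * c * √(1 - c * keplerEccentricity c a) ≠ 0 := by
  intro h0
  have hw2 := sq_sqrt (one_sub_mul_keplerEccentricity_pos ha hc').le
  refine (sq_mul_one_sub_mul_keplerEccentricity_lt ha hc hc').ne' ?_
  rw [eq_neg_of_add_eq_zero_left h0]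
  linear_combination (a * c * √(1 - c * keplerEccentricity c a)) ^ 2 * hε' + (a * c) ^ 2 * hw2

end

/-- Nondegeneracy of S-arcs: the derivative of the rotating Kepler energy with
respect to the semi-major axis never vanishes for `a > 1`, `θ ∈ (0,π)`. -/
theorem stmt_2 (a θ ε' : ℝ) (ha : 1 < a) (hθ0 : 0 < θ) (hθπ : θ < Real.pi)
    (hε : ε' = 1 ∨ ε' = -1) :
    deriv (fun x : ℝ =>
      -(1 / (2 * x)) - ε' * Real.sqrt
        (1 - Real.cos θ *
          ((Real.cos θ + Real.sqrt (4 * x ^ 2 - 4 * x + Real.cos θ ^ 2)) / (2 * x)))) a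
      ≠ 0 := by
  have hc : -1 < cos θ := by simpa using cos_lt_cos_of_nonneg_of_le_pi hθ0.le le_rfl hθπ
  have hc' : cos θ < 1 := by simpa using cos_lt_cos_of_nonneg_of_le_pi le_rfl hθπ.le hθ0
  have hε' : ε' ^ 2 = 1 := by rcases hε with rfl | rfl <;> norm_num
  have hs := two_mul_mul_keplerEccentricity_sub_pos (c := cos θ) ha
  refine ne_of_eq_of_ne (hasDerivAt_rotatingKeplerEnergy ha hc' ε').deriv (div_ne_zero ?_ ?_)
  · exact two_mul_mul_keplerEccentricity_sub_add_ne_zero ha hc hc' hε'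
  · positivity
end

section
/- For $\theta = \pi$ (type 2 arcs, full Kepler ellipses tangent internally to the unit circle) with semi-major axis $a > 1$ and direction of rotation $\epsilon' \in \{\pm 1\}$, the action is $\mathcal{A}(a) = 2\pi\sqrt{a} - 2\pi\epsilon' a\sqrt{2a-1}$; this is positive for all $a > 1$ when $\epsilon' = -1$ and negative for all $a > 1$ when $\epsilon' = +1$. -/
open Real

lemma sqrt_lt_mul_sqrt_two_mul_sub_one {a : ℝ} (ha : 1 < a) : √a < a * √(2 * a - 1) :=
  calc √a < a := sqrt_lt_self_iff.mpr ha
    _ = a * 1 := (mul_one a).symm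
    _ ≤ a * √(2 * a - 1) :=
      mul_le_mul_of_nonneg_left (one_le_sqrt.mpr (by linarith)) (by linarith)

theorem stmt_11_general (a ε' : ℝ) (ha : 1 < a) :
    (ε' = -1 →
      0 < 2 * Real.pi * Real.sqrt a - 2 * Real.pi * ε' * a * Real.sqrt (2 * a - 1)) ∧
    (ε' = 1 →
      2 * Real.pi * Real.sqrt a - 2 * Real.pi * ε' * a * Real.sqrt (2 * a - 1) < 0) := by
  have hkey := sqrt_lt_mul_sqrt_two_mul_sub_one ha
  have hsqrt : 0 < √a := sqrt_pos.mpr (by linarith)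
  have hpi := pi_pos
  constructor
  · rintro rfl
    nlinarith
  · rintro rfl
    nlinarith

/-- Action of type 2 arcs (`θ = π`): `𝒜(a) = 2π√a - 2πε'a√(2a-1)` is positive
for `ε' = -1` and negative for `ε' = +1`, for all `a > 1`. -/
theorem stmt_11 (a ε' : ℝ) (ha : 1 < a) (hε : ε' = 1 ∨ ε' = -1) :
    (ε' = -1 →
      0 < 2 * Real.pi * Real.sqrt a - 2 * Real.pi * ε' * a * Real.sqrt (2 * a - 1)) ∧
    (ε' = 1 →
      2 * Real.pi * Real.sqrt a - 2 * Real.pi * ε' * a * Real.sqrt (2 * a - 1) < 0) :=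
  stmt_11_general a ε' ha
end

section
/- For $\theta = 0$ (rectilinear limiting case), the action $\mathcal{A}(a) = 4\sqrt{a}\arccos\left(\sqrt{\frac{1}{2a}}\right) - 2\sqrt{2 - \frac{1}{a}}$ is nonnegative for all $a \geq 1$. -/
/-! Since `a ≥ 1`, the argument `√(1/(2a))` of `arccos` is at most `cos (π/4)`, so the first
term is at least `4 · 1 · π/4 = π`, while the second is at most `2√2 < π`. -/

open Real

lemma Real.pi_div_four_le_arccos {x : ℝ} (hx : x ≤ √2 / 2) : π / 4 ≤ arccos x :=
  calc π / 4 = arccos (cos (π / 4)) := (arccos_cos (by positivity) (by linarith [pi_pos])).symm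
    _ ≤ arccos x := arccos_le_arccos (cos_pi_div_four ▸ hx)

lemma Real.two_mul_sqrt_two_le_pi : 2 * √2 ≤ π := by
  have : √2 ≤ 3 / 2 := sqrt_le_iff.mpr ⟨by norm_num, by norm_num⟩
  linarith [pi_gt_three]

lemma Real.sqrt_one_div_two_mul_le {a : ℝ} (ha : 1 ≤ a) : √(1 / (2 * a)) ≤ √2 / 2 := by
  refine sqrt_le_iff.mpr ⟨by positivity, ?_⟩
  rw [div_pow, sq_sqrt zero_le_two, div_le_div_iff₀ (by positivity) (by norm_num)]
  linarith

/-- In the rectilinear limiting case `θ = 0` the action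
`𝒜(a) = 4√a · arccos(√(1/(2a))) - 2√(2 - 1/a)` is nonnegative for all `a ≥ 1`. -/
theorem stmt_12 (a : ℝ) (ha : 1 ≤ a) :
    0 ≤ 4 * Real.sqrt a * Real.arccos (Real.sqrt (1 / (2 * a)))
        - 2 * Real.sqrt (2 - 1 / a) := by
  have h_arccos : π / 4 ≤ arccos √(1 / (2 * a)) :=
    pi_div_four_le_arccos (sqrt_one_div_two_mul_le ha)
  have h_sqrt_a : 1 ≤ √a := one_le_sqrt.mpr ha
  have h_sqrt_le : √(2 - 1 / a) ≤ √2 :=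
    sqrt_le_sqrt (by linarith [one_div_pos.mpr (zero_lt_one.trans_le ha)])
  have h_first : π ≤ 4 * √a * arccos √(1 / (2 * a)) := by
    nlinarith [mul_le_mul h_sqrt_a h_arccos (by positivity) (sqrt_nonneg a)]
  linarith [two_mul_sqrt_two_le_pi]
end
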